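/- For every even natural number k with k ≥ 2, the set of zeros of F_k in the closed interval [-1,1] is exactly {-1, 0, 1}. -/
import Mathlib

open Polynomial intervalIntegral Set

private lemma poly_intInt (p : Polynomial ℝ) (a b : ℝ) :
    IntervalIntegrable (fun x => p.eval x) MeasureTheory.volume a b :=
  (p.continuous_aeval.intervalIntegrable _ _)

private lemma poly_uniq (p q : Polynomial ℝ)
    (hd : Polynomial.derivative p = Polynomial.derivative q)
    (hi : (∫ x in (-1:ℝ)..1, p.eval x) = ∫ x in (-1:ℝ)..1, q.eval x) : p = q := by
  have hr : Polynomial.derivative (p - q) = 0 := by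
    rw [Polynomial.derivative_sub, hd, sub_self]
  have hc : p - q = Polynomial.C ((p - q).coeff 0) := eq_C_of_derivative_eq_zero hr
  have hiz : (∫ x in (-1:ℝ)..1, (p - q).eval x) = 0 := by
    simp only [Polynomial.eval_sub]
    rw [intervalIntegral.integral_sub (poly_intInt p _ _) (poly_intInt q _ _), hi, sub_self]
  rw [hc] at hiz
  simp only [Polynomial.eval_C, intervalIntegral.integral_const, smul_eq_mul] at hiz
  have h0 : (p - q).coeff 0 = 0 := by linarith
  have : p - q = 0 := by rw [hc, h0, map_zero]
  exact sub_eq_zero.mp this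

/-- FTC for polynomials. -/
private lemma poly_ftc (p : Polynomial ℝ) (a b : ℝ) :
    (∫ x in a..b, (Polynomial.derivative p).eval x) = p.eval b - p.eval a := by
  apply intervalIntegral.integral_deriv_eq_sub'
  · funext x; exact Polynomial.deriv p
  · intro x _; exact p.differentiableAt
  · exact ((Polynomial.derivative p).continuous_aeval).continuousOn

theorem stmt1 (F : ℕ → Polynomial ℝ)
    (hF0 : F 0 = Polynomial.X)
    (hFd : ∀ k : ℕ, Polynomial.derivative (F (k + 1)) = F k)
    (hFi : ∀ k : ℕ, ∫ x in (-1 : ℝ)..1, (F (k + 1)).eval x = 0)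
    (k : ℕ) (hk : Even k) (hk2 : 2 ≤ k) :
    {x : ℝ | x ∈ Set.Icc (-1 : ℝ) 1 ∧ (F k).eval x = 0} = {-1, 0, 1} := by
  -- parity
  have hpar : ∀ n : ℕ, (F n).comp (-Polynomial.X) = Polynomial.C ((-1:ℝ)^(n+1)) * F n := by
    intro n
    induction n with
    | zero => simp [hF0]
    | succ n ih =>
      apply poly_uniq
      · rw [Polynomial.derivative_comp, Polynomial.derivative_mul, Polynomial.derivative_C,
          zero_mul, zero_add, hFd, Polynomial.derivative_neg, Polynomial.derivative_X, ih]
        rw [show (-1 : Polynomial ℝ) = Polynomial.C (-1:ℝ) by simp]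
        rw [← mul_assoc, ← Polynomial.C_mul]
        congr 2
        ring
      · have h1 : (∫ x in (-1:ℝ)..1, ((F (n+1)).comp (-Polynomial.X)).eval x)
            = ∫ x in (-1:ℝ)..1, (F (n+1)).eval (-x) := by
          congr 1; funext x; simp
        rw [h1]
        rw [show (∫ x in (-1:ℝ)..1, (F (n+1)).eval (-x))
            = ∫ x in (-(1:ℝ))..(-(-1:ℝ)), (F (n+1)).eval x from
          intervalIntegral.integral_comp_neg (fun x => (F (n+1)).eval x)]
        simp only [neg_neg]
        rw [hFi n]
        simp only [Polynomial.eval_mul, Polynomial.eval_C]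
        rw [intervalIntegral.integral_const_mul, hFi n, mul_zero]
  have hodd : ∀ n : ℕ, Even n → ∀ x : ℝ, (F n).eval (-x) = -(F n).eval x := by
    intro n hn x
    have := congrArg (Polynomial.eval x) (hpar n)
    simp only [Polynomial.eval_comp, Polynomial.eval_neg, Polynomial.eval_X,
      Polynomial.eval_mul, Polynomial.eval_C] at this
    rw [this, Odd.neg_one_pow (by exact hn.add_one)]
    ring
  -- explicit F1 and F2
  have hF1 : F 1 = Polynomial.C (1/2:ℝ) * Polynomial.X^2 - Polynomial.C (1/6:ℝ) := by
    apply poly_uniq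
    · rw [hFd 0, hF0]
      simp only [Polynomial.derivative_sub, Polynomial.derivative_C, sub_zero,
        Polynomial.derivative_mul, Polynomial.derivative_C_mul, Polynomial.derivative_X_pow]
      norm_num
      rw [← mul_assoc, ← Polynomial.C_mul]
      norm_num
    · rw [hFi 0]
      simp only [Polynomial.eval_sub, Polynomial.eval_mul, Polynomial.eval_C,
        Polynomial.eval_pow, Polynomial.eval_X]
      rw [intervalIntegral.integral_sub (by exact (Continuous.intervalIntegrable (by continuity) _ _))
        (by exact (Continuous.intervalIntegrable (by continuity) _ _)),
        intervalIntegral.integral_const_mul, integral_pow, intervalIntegral.integral_const]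
      norm_num
  have hF2 : F 2 = Polynomial.C (1/6:ℝ) * Polynomial.X^3 - Polynomial.C (1/6:ℝ) * Polynomial.X := by
    apply poly_uniq
    · rw [hFd 1, hF1]
      simp only [Polynomial.derivative_sub, Polynomial.derivative_C_mul,
        Polynomial.derivative_X_pow, Polynomial.derivative_X]
      norm_num
      rw [← mul_assoc, ← Polynomial.C_mul]
      norm_num
    · rw [hFi 1]
      simp only [Polynomial.eval_sub, Polynomial.eval_mul, Polynomial.eval_C,
        Polynomial.eval_pow, Polynomial.eval_X]
      rw [intervalIntegral.integral_sub (by exact (Continuous.intervalIntegrable (by continuity) _ _))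
        (by exact (Continuous.intervalIntegrable (by continuity) _ _)),
        intervalIntegral.integral_const_mul, intervalIntegral.integral_const_mul,
        integral_pow, integral_id]
      norm_num
  -- key induction
  have key : ∀ m : ℕ, 1 ≤ m →
      (F (2*m)).eval 1 = 0 ∧ ∀ x ∈ Set.Ioo (0:ℝ) 1, (F (2*m)).eval x ≠ 0 := by
    intro m hm
    induction m with
    | zero => omega
    | succ m ih =>
      rcases Nat.eq_or_lt_of_le hm with h1 | h1
      · -- base case m = 0
        have hm0 : m = 0 := by omega
        subst hm0
        constructor
        · norm_num [hF2]
        · intro x hx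
          obtain ⟨hx0, hx1⟩ := hx
          have hlt : (F 2).eval x < 0 := by
            simp only [hF2, Polynomial.eval_sub, Polynomial.eval_mul, Polynomial.eval_C,
              Polynomial.eval_pow, Polynomial.eval_X]
            nlinarith [mul_pos hx0 (mul_pos (sub_pos.2 hx1) (by linarith : (0:ℝ) < x + 1))]
          exact ne_of_lt hlt
      · have hm1 : 1 ≤ m := by omega
        obtain ⟨ih1, ihz⟩ := ih hm1
        have hoddm : ∀ x : ℝ, (F (2*m)).eval (-x) = -(F (2*m)).eval x :=
          hodd (2*m) (even_two_mul m)
        have hodd2 : ∀ x : ℝ, (F (2*(m+1))).eval (-x) = -(F (2*(m+1))).eval x :=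
          hodd (2*(m+1)) (even_two_mul (m+1))
        have hidx : 2*(m+1) = (2*m+1)+1 := by ring
        -- eval at 0 is 0
        have h0 : (F (2*(m+1))).eval 0 = 0 := by
          have := hodd2 0; rw [neg_zero] at this; linarith
        -- eval at 1 is 0
        have h1v : (F (2*(m+1))).eval 1 = 0 := by
          have hint : (∫ x in (-1:ℝ)..1, (F (2*m+1)).eval x) = 0 := hFi (2*m)
          have hftc := poly_ftc (F (2*(m+1))) (-1) 1
          rw [show Polynomial.derivative (F (2*(m+1))) = F (2*m+1) by rw [hidx]; exact hFd _,
            hint] at hftc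
          have hneg := hodd2 1
          norm_num at hneg
          linarith
        refine ⟨h1v, ?_⟩
        -- F (2m) has constant sign on (0,1)
        have hsign : (∀ x ∈ Set.Ioo (0:ℝ) 1, 0 < (F (2*m)).eval x) ∨
            (∀ x ∈ Set.Ioo (0:ℝ) 1, (F (2*m)).eval x < 0) := by
          by_contra hc
          push_neg at hc
          obtain ⟨⟨a, ha, hfa⟩, ⟨b, hb, hfb⟩⟩ := hc
          have hfa' : (F (2*m)).eval a < 0 := lt_of_le_of_ne hfa (ihz a ha)
          have hfb' : 0 < (F (2*m)).eval b := lt_of_le_of_ne (by linarith) (Ne.symm (ihz b hb))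
          have hcont : ContinuousOn (fun x => (F (2*m)).eval x) (Set.uIcc a b) :=
            ((F (2*m)).continuous_aeval).continuousOn
          have h0mem : (0:ℝ) ∈ Set.uIcc ((F (2*m)).eval a) ((F (2*m)).eval b) := by
            rw [Set.mem_uIcc]; left; exact ⟨le_of_lt hfa', le_of_lt hfb'⟩
          obtain ⟨c, hc1, hc2⟩ := intermediate_value_uIcc hcont h0mem
          have hcI : c ∈ Set.Ioo (0:ℝ) 1 := by
            have hsub : Set.uIcc a b ⊆ Set.Ioo (0:ℝ) 1 :=
              (Set.ordConnected_Ioo).uIcc_subset ha hb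
            exact hsub hc1
          exact ihz c hcI hc2
        -- strict monotonicity of F (2m+1) on [0,1]
        have hderiv : ∀ x : ℝ, deriv (fun y => (F (2*m+1)).eval y) x = (F (2*m)).eval x := by
          intro x; rw [Polynomial.deriv, hFd]
        have hcont01 : ContinuousOn (fun y => (F (2*m+1)).eval y) (Set.Icc (0:ℝ) 1) :=
          ((F (2*m+1)).continuous_aeval).continuousOn
        have hinj : Set.InjOn (fun y => (F (2*m+1)).eval y) (Set.Icc (0:ℝ) 1) := by
          rcases hsign with hs | hs
          · refine (strictMonoOn_of_deriv_pos (convex_Icc 0 1) hcont01 ?_).injOn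
            intro x hx
            rw [interior_Icc] at hx
            rw [hderiv]; exact hs x hx
          · refine (strictAntiOn_of_deriv_neg (convex_Icc 0 1) hcont01 ?_).injOn
            intro x hx
            rw [interior_Icc] at hx
            rw [hderiv]; exact hs x hx
        -- no zero in (0,1)
        intro b hb hzb
        obtain ⟨hb0, hb1⟩ := hb
        have hcont : ∀ u v : ℝ, ContinuousOn (fun y => (F (2*(m+1))).eval y) (Set.Icc u v) :=
          fun u v => ((F (2*(m+1))).continuous_aeval).continuousOn
        obtain ⟨c1, hc1, hc1z⟩ := exists_deriv_eq_zero hb0 (hcont 0 b) (by rw [h0, hzb])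
        obtain ⟨c2, hc2, hc2z⟩ := exists_deriv_eq_zero hb1 (hcont b 1) (by rw [hzb, h1v])
        have hder2 : ∀ x : ℝ, deriv (fun y => (F (2*(m+1))).eval y) x = (F (2*m+1)).eval x := by
          intro x; rw [Polynomial.deriv, hidx, hFd]
        rw [hder2] at hc1z hc2z
        have hc1I : c1 ∈ Set.Icc (0:ℝ) 1 :=
          ⟨le_of_lt hc1.1, le_trans (le_of_lt hc1.2) (le_of_lt hb1)⟩
        have hc2I : c2 ∈ Set.Icc (0:ℝ) 1 :=
          ⟨le_trans (le_of_lt hb0) (le_of_lt hc2.1), le_of_lt hc2.2⟩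
        have heq : c1 = c2 := hinj hc1I hc2I (by simp only []; rw [hc1z, hc2z])
        have hlt : c1 < c2 := lt_trans hc1.2 hc2.1
        exact absurd heq (ne_of_lt hlt)
  -- conclude
  obtain ⟨m, hkm⟩ := hk
  have hkm' : k = 2 * m := by omega
  have hm1 : 1 ≤ m := by omega
  obtain ⟨h1v, hnz⟩ := key m hm1
  subst hkm'
  have hoddk : ∀ x : ℝ, (F (2*m)).eval (-x) = -(F (2*m)).eval x := hodd _ (even_two_mul m)
  have h0 : (F (2*m)).eval 0 = 0 := by
    have := hoddk 0; rw [neg_zero] at this; linarith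
  ext x
  simp only [Set.mem_setOf_eq, Set.mem_insert_iff, Set.mem_singleton_iff, Set.mem_Icc]
  constructor
  · rintro ⟨⟨hxl, hxr⟩, hz⟩
    by_contra hc
    push_neg at hc
    obtain ⟨hne1, hne0, hne1'⟩ := hc
    rcases lt_trichotomy x 0 with hx | hx | hx
    · have hxm : -x ∈ Set.Ioo (0:ℝ) 1 := by
        constructor
        · linarith
        · rcases lt_or_eq_of_le hxl with h | h
          · linarith
          · exact absurd h.symm hne1
      exact hnz (-x) hxm (by rw [hoddk x, hz, neg_zero])
    · exact hne0 hx
    · have hxm : x ∈ Set.Ioo (0:ℝ) 1 := by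
        constructor
        · exact hx
        · rcases lt_or_eq_of_le hxr with h | h
          · exact h
          · exact absurd h hne1'
      exact hnz x hxm hz
  · rintro (rfl | rfl | rfl)
    · refine ⟨by norm_num, ?_⟩
      have := hoddk 1; norm_num at this; linarith
    · exact ⟨by norm_num, h0⟩
    · exact ⟨by norm_num, h1v⟩
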